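/- Let Σ be a d×d real positive semidefinite matrix, let t = Tr(Σ²), and let x be a centered Gaussian random vector on ℝ^d with covariance Σ. Then for all deterministic u, v ∈ ℝ^d: E[(⟨u,x⟩⁴ − 6t·⟨u,x⟩² + 3t²)·(⟨v,x⟩⁴ − 6t·⟨v,x⟩² + 3t²)] = 24·(uᵀΣv)⁴ + 72·(uᵀΣu − t)·(vᵀΣv − t)·(uᵀΣv)² + 9·(uᵀΣu − t)²·(vᵀΣv − t)². -/

import Mathlib

open Matrix MeasureTheory ProbabilityTheory

/-- The standard Gaussian measure on `ℝ^d` (i.i.d. standard normal coordinates). -/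
noncomputable def stdGaussianPi (d : ℕ) : Measure (Fin d → ℝ) :=
  Measure.pi fun _ : Fin d => gaussianReal 0 1

section
open scoped ComplexOrder

/-- The positive semidefinite square root of a positive semidefinite matrix
(the definition `Matrix.PosSemidef.sqrt` of the older Mathlib, removed since). -/
noncomputable def Matrix.PosSemidef.sqrt {n 𝕜 : Type*} [Fintype n] [DecidableEq n] [RCLike 𝕜]
    {A : Matrix n n 𝕜} (hA : A.PosSemidef) : Matrix n n 𝕜 :=
  hA.1.eigenvectorUnitary.1 * diagonal ((↑) ∘ (√·) ∘ hA.1.eigenvalues) *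
    (star hA.1.eigenvectorUnitary : Matrix n n 𝕜)

end

/-!
Write `x = Σ^{1/2} g` with `g` standard Gaussian and put `a = Σ^{1/2} u`, `b = Σ^{1/2} v`, so that
`⟨u, x⟩ = ⟨a, g⟩`, `⟨v, x⟩ = ⟨b, g⟩` and `a ⬝ a = uᵀΣu`, `a ⬝ b = uᵀΣv`, `b ⬝ b = vᵀΣv`.
Every linear form `⟨w, g⟩` has law `N(0, |w|²)`, whose even moments are `(2k - 1)‼ |w|^{2k}`
(a Gamma integral). For `w = a + s b` this makes the moments of `⟨a, g⟩ + s ⟨b, g⟩` explicit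
polynomials in `s`; adding the values at `s` and `-s` cancels the odd mixed moments, and the even
ones `E[X²Y²]`, `E[X⁴Y²]`, `E[X⁴Y⁴]` are solved for from `s = 1, 2, 3` (a Vandermonde system).
Expanding the product of the two quartics reduces the claim to these moments.
-/

open Real Set
open scoped Nat NNReal

theorem integral_Ioi_pow_two_mul_exp_neg_half_sq (k : ℕ) :
    ∫ x in Ioi (0 : ℝ), x ^ (2 * k) * exp (-(1 / 2) * x ^ 2) = (2 * k - 1 : ℕ)‼ * √(2 * π) / 2 := by
  have h := integral_rpow_mul_exp_neg_mul_rpow (p := 2) (q := (2 * k : ℕ)) (b := 1 / 2)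
    two_pos (neg_one_lt_zero.trans_le (Nat.cast_nonneg _)) (by norm_num)
  simp only [rpow_natCast, rpow_two] at h
  rw [h, show (((2 * k : ℕ) : ℝ) + 1) / 2 = k + 1 / 2 by push_cast; ring, Gamma_nat_add_half,
    show -(((2 * k : ℕ) : ℝ) + 1) / 2 = -(k : ℝ) + -(1 / 2) by push_cast; ring,
    rpow_add (by norm_num), rpow_neg (by norm_num), rpow_neg (by norm_num), rpow_natCast,
    ← sqrt_eq_rpow, one_div, inv_pow, sqrt_inv, sqrt_mul zero_le_two]
  field_simp

theorem integral_pow_two_mul_exp_neg_half_sq (k : ℕ) :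
    ∫ x : ℝ, x ^ (2 * k) * exp (-(1 / 2) * x ^ 2) = (2 * k - 1 : ℕ)‼ * √(2 * π) := by
  calc ∫ x : ℝ, x ^ (2 * k) * exp (-(1 / 2) * x ^ 2)
      = ∫ x : ℝ, |x| ^ (2 * k) * exp (-(1 / 2) * |x| ^ 2) := by simp only [pow_mul, sq_abs]
    _ = _ := by
      rw [integral_comp_abs (f := fun x => x ^ (2 * k) * exp (-(1 / 2) * x ^ 2)),
        integral_Ioi_pow_two_mul_exp_neg_half_sq]
      ring

theorem integral_pow_two_mul_gaussianReal_zero_one (k : ℕ) :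
    ∫ x, x ^ (2 * k) ∂gaussianReal 0 1 = (2 * k - 1 : ℕ)‼ := by
  rw [integral_gaussianReal_eq_integral_smul one_ne_zero]
  simp only [gaussianPDFReal, smul_eq_mul, NNReal.coe_one, mul_one, sub_zero]
  calc ∫ x, (√(2 * π))⁻¹ * exp (-x ^ 2 / 2) * x ^ (2 * k)
      = (√(2 * π))⁻¹ * ∫ x : ℝ, x ^ (2 * k) * exp (-(1 / 2) * x ^ 2) := by
        rw [← integral_const_mul]; congr 1 with x; ring_nf
    _ = _ := by rw [integral_pow_two_mul_exp_neg_half_sq]; field_simp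

theorem integral_pow_two_mul_gaussianReal (v : ℝ≥0) (k : ℕ) :
    ∫ x, x ^ (2 * k) ∂gaussianReal 0 v = v ^ k * (2 * k - 1 : ℕ)‼ := by
  have hv : gaussianReal 0 v = (gaussianReal 0 1).map (√v * ·) := by
    rw [gaussianReal_map_const_mul, mul_zero, mul_one]
    congr
    ext
    simp
  rw [hv, integral_map (by fun_prop) (by fun_prop)]
  simp only [mul_pow, pow_mul, Real.sq_sqrt v.coe_nonneg]
  rw [integral_const_mul, ← integral_pow_two_mul_gaussianReal_zero_one]
  simp only [pow_mul]

theorem integrable_pow_gaussianReal (μ : ℝ) (v : ℝ≥0) (n : ℕ) :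
    Integrable (fun x : ℝ => x ^ n) (gaussianReal μ v) := by
  rcases eq_or_ne n 0 with rfl | hn
  · simp
  exact ((memLp_id_gaussianReal n).integrable_norm_pow hn).mono' (by fun_prop)
    (ae_of_all _ fun x => (norm_pow x n).le)

section StdGaussianPi

variable {d : ℕ}

theorem stdGaussianPi_eq_map_ofLp :
    stdGaussianPi d = (stdGaussian (EuclideanSpace ℝ (Fin d))).map WithLp.ofLp := by
  rw [← map_pi_eq_stdGaussian, Measure.map_map (by fun_prop) (by fun_prop)]
  exact (Measure.map_id).symm

theorem stdGaussianPi_map_dotProduct (w : Fin d → ℝ) :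
    (stdGaussianPi d).map (w ⬝ᵥ ·) = gaussianReal 0 (w ⬝ᵥ w).toNNReal := by
  have hL : (w ⬝ᵥ ·) ∘ WithLp.ofLp = innerSL ℝ (WithLp.toLp 2 w : EuclideanSpace ℝ (Fin d)) := by
    ext x
    simp [dotProduct, PiLp.inner_apply, mul_comm]
  rw [stdGaussianPi_eq_map_ofLp, Measure.map_map (by fun_prop) (by fun_prop), hL,
    IsGaussian.map_eq_gaussianReal, integral_strongDual_stdGaussian, variance_dual_stdGaussian,
    innerSL_apply_norm, EuclideanSpace.real_norm_sq_eq]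
  simp [dotProduct, sq]

instance isProbabilityMeasure_stdGaussianPi : IsProbabilityMeasure (stdGaussianPi d) := by
  unfold stdGaussianPi; infer_instance

theorem integrable_dotProduct_pow (w : Fin d → ℝ) (n : ℕ) :
    Integrable (fun g => (w ⬝ᵥ g) ^ n) (stdGaussianPi d) := by
  have h := integrable_pow_gaussianReal 0 (w ⬝ᵥ w).toNNReal n
  rwa [← stdGaussianPi_map_dotProduct, integrable_map_measure (by fun_prop) (by fun_prop)] at h

theorem integral_dotProduct_pow_two_mul (w : Fin d → ℝ) (k : ℕ) :
    ∫ g, (w ⬝ᵥ g) ^ (2 * k) ∂stdGaussianPi d = (w ⬝ᵥ w) ^ k * (2 * k - 1 : ℕ)‼ := by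
  rw [← integral_map (f := (· ^ (2 * k))) (by fun_prop : AEMeasurable (w ⬝ᵥ ·) _) (by fun_prop),
    stdGaussianPi_map_dotProduct, integral_pow_two_mul_gaussianReal,
    Real.coe_toNNReal _ (by simpa using dotProduct_star_self_nonneg w)]

theorem integrable_dotProduct_pow_mul_pow (a b : Fin d → ℝ) (p q : ℕ) :
    Integrable (fun g => (a ⬝ᵥ g) ^ p * (b ⬝ᵥ g) ^ q) (stdGaussianPi d) := by
  refine ((integrable_dotProduct_pow a (p * 2)).add (integrable_dotProduct_pow b (q * 2))).mono'
    (by fun_prop) (ae_of_all _ fun g => ?_)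
  simp only [pow_mul, Real.norm_eq_abs, abs_mul, Pi.add_apply]
  nlinarith [two_mul_le_add_sq |(a ⬝ᵥ g) ^ p| |(b ⬝ᵥ g) ^ q|, sq_abs ((a ⬝ᵥ g) ^ p),
    sq_abs ((b ⬝ᵥ g) ^ q), abs_nonneg ((a ⬝ᵥ g) ^ p), abs_nonneg ((b ⬝ᵥ g) ^ q)]

open Finset in
theorem sum_range_choose_mul_integral_dotProduct_pow_mul_pow (a b : Fin d → ℝ) (s : ℝ) (m : ℕ) :
    ∑ k ∈ range (2 * m + 1), ((2 * m).choose k : ℝ) * s ^ (2 * m - k) *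
        ∫ g, (a ⬝ᵥ g) ^ k * (b ⬝ᵥ g) ^ (2 * m - k) ∂stdGaussianPi d
      = (a ⬝ᵥ a + 2 * s * (a ⬝ᵥ b) + s ^ 2 * (b ⬝ᵥ b)) ^ m * (2 * m - 1 : ℕ)‼ := by
  have hexpand : ∀ g, ((a + s • b) ⬝ᵥ g) ^ (2 * m) = ∑ k ∈ range (2 * m + 1),
      ((2 * m).choose k : ℝ) * s ^ (2 * m - k) * ((a ⬝ᵥ g) ^ k * (b ⬝ᵥ g) ^ (2 * m - k)) := by
    intro g
    rw [add_dotProduct, smul_dotProduct, smul_eq_mul, add_pow]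
    exact sum_congr rfl fun k _ => by ring
  have hnorm : (a + s • b) ⬝ᵥ (a + s • b) = a ⬝ᵥ a + 2 * s * (a ⬝ᵥ b) + s ^ 2 * (b ⬝ᵥ b) := by
    simp only [add_dotProduct, dotProduct_add, smul_dotProduct, dotProduct_smul, smul_eq_mul,
      dotProduct_comm b a]
    ring
  rw [← hnorm, ← integral_dotProduct_pow_two_mul, integral_congr_ae (ae_of_all _ hexpand),
    integral_finsetSum _ fun k _ => (integrable_dotProduct_pow_mul_pow a b _ _).const_mul _]
  simp only [integral_const_mul]

theorem integral_dotProduct_sq_mul_sq (a b : Fin d → ℝ) :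
    ∫ g, (a ⬝ᵥ g) ^ 2 * (b ⬝ᵥ g) ^ 2 ∂stdGaussianPi d
      = (a ⬝ᵥ a) * (b ⬝ᵥ b) + 2 * (a ⬝ᵥ b) ^ 2 := by
  have ha := integral_dotProduct_pow_two_mul a 2
  have hb := integral_dotProduct_pow_two_mul b 2
  have h1 := sum_range_choose_mul_integral_dotProduct_pow_mul_pow a b 1 2
  have h2 := sum_range_choose_mul_integral_dotProduct_pow_mul_pow a b (-1) 2
  norm_num [Finset.sum_range_succ, Nat.choose] at ha hb h1 h2
  linear_combination (h1 + h2) / 12 - ha / 6 - hb / 6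

theorem integral_dotProduct_pow_four_mul_sq (a b : Fin d → ℝ) :
    ∫ g, (a ⬝ᵥ g) ^ 4 * (b ⬝ᵥ g) ^ 2 ∂stdGaussianPi d
      = 3 * (a ⬝ᵥ a) ^ 2 * (b ⬝ᵥ b) + 12 * (a ⬝ᵥ a) * (a ⬝ᵥ b) ^ 2 := by
  have ha := integral_dotProduct_pow_two_mul a 3
  have hb := integral_dotProduct_pow_two_mul b 3
  have h1 := sum_range_choose_mul_integral_dotProduct_pow_mul_pow a b 1 3
  have h1' := sum_range_choose_mul_integral_dotProduct_pow_mul_pow a b (-1) 3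
  have h2 := sum_range_choose_mul_integral_dotProduct_pow_mul_pow a b 2 3
  have h2' := sum_range_choose_mul_integral_dotProduct_pow_mul_pow a b (-2) 3
  norm_num [Finset.sum_range_succ, Nat.choose] at ha hb h1 h1' h2 h2'
  linear_combination (2 / 45) * (h1 + h1') - (1 / 360) * (h2 + h2') + (4 / 15) * hb - (1 / 12) * ha

theorem integral_dotProduct_pow_four_mul_pow_four (a b : Fin d → ℝ) :
    ∫ g, (a ⬝ᵥ g) ^ 4 * (b ⬝ᵥ g) ^ 4 ∂stdGaussianPi d
      = 9 * (a ⬝ᵥ a) ^ 2 * (b ⬝ᵥ b) ^ 2 + 72 * (a ⬝ᵥ a) * (b ⬝ᵥ b) * (a ⬝ᵥ b) ^ 2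
        + 24 * (a ⬝ᵥ b) ^ 4 := by
  have ha := integral_dotProduct_pow_two_mul a 4
  have hb := integral_dotProduct_pow_two_mul b 4
  have h1 := sum_range_choose_mul_integral_dotProduct_pow_mul_pow a b 1 4
  have h1' := sum_range_choose_mul_integral_dotProduct_pow_mul_pow a b (-1) 4
  have h2 := sum_range_choose_mul_integral_dotProduct_pow_mul_pow a b 2 4
  have h2' := sum_range_choose_mul_integral_dotProduct_pow_mul_pow a b (-2) 4
  have h3 := sum_range_choose_mul_integral_dotProduct_pow_mul_pow a b 3 4
  have h3' := sum_range_choose_mul_integral_dotProduct_pow_mul_pow a b (-3) 4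
  norm_num [Finset.sum_range_succ, Nat.choose] at ha hb h1 h1' h2 h2' h3 h3'
  linear_combination -(13 / 3360) * (h1 + h1') + (1 / 840) * (h2 + h2') - (1 / 10080) * (h3 + h3')
    + (7 / 10) * hb + (1 / 180) * ha

theorem integral_hermite4_mul_hermite4 (a b : Fin d → ℝ) (t : ℝ) :
    ∫ g, ((a ⬝ᵥ g) ^ 4 - 6 * t * (a ⬝ᵥ g) ^ 2 + 3 * t ^ 2)
        * ((b ⬝ᵥ g) ^ 4 - 6 * t * (b ⬝ᵥ g) ^ 2 + 3 * t ^ 2) ∂stdGaussianPi d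
      = 24 * (a ⬝ᵥ b) ^ 4 + 72 * (a ⬝ᵥ a - t) * (b ⬝ᵥ b - t) * (a ⬝ᵥ b) ^ 2
        + 9 * (a ⬝ᵥ a - t) ^ 2 * (b ⬝ᵥ b - t) ^ 2 := by
  have hexpand : ∀ g, ((a ⬝ᵥ g) ^ 4 - 6 * t * (a ⬝ᵥ g) ^ 2 + 3 * t ^ 2)
      * ((b ⬝ᵥ g) ^ 4 - 6 * t * (b ⬝ᵥ g) ^ 2 + 3 * t ^ 2)
      = (a ⬝ᵥ g) ^ 4 * (b ⬝ᵥ g) ^ 4 - 6 * t * ((a ⬝ᵥ g) ^ 4 * (b ⬝ᵥ g) ^ 2)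
        - 6 * t * ((b ⬝ᵥ g) ^ 4 * (a ⬝ᵥ g) ^ 2) + 36 * t ^ 2 * ((a ⬝ᵥ g) ^ 2 * (b ⬝ᵥ g) ^ 2)
        + 3 * t ^ 2 * (a ⬝ᵥ g) ^ (2 * 2) + 3 * t ^ 2 * (b ⬝ᵥ g) ^ (2 * 2)
        - 18 * t ^ 3 * (a ⬝ᵥ g) ^ (2 * 1) - 18 * t ^ 3 * (b ⬝ᵥ g) ^ (2 * 1) + 9 * t ^ 4 :=
    fun g => by ring
  have hab := integrable_dotProduct_pow_mul_pow (d := d) a b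
  have hba := integrable_dotProduct_pow_mul_pow (d := d) b a
  have ha := integrable_dotProduct_pow (d := d) a
  have hb := integrable_dotProduct_pow (d := d) b
  rw [integral_congr_ae (ae_of_all _ hexpand), integral_add, integral_sub, integral_sub,
    integral_add, integral_add, integral_add, integral_sub, integral_sub]
  · simp only [integral_const_mul, integral_const, probReal_univ, one_smul,
      integral_dotProduct_pow_two_mul, integral_dotProduct_pow_four_mul_pow_four,
      integral_dotProduct_pow_four_mul_sq, integral_dotProduct_sq_mul_sq, dotProduct_comm b a]
    norm_num [Nat.doubleFactorial]
    ring
  all_goals fun_prop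

end StdGaussianPi

namespace Matrix.PosSemidef

open scoped ComplexOrder

variable {n 𝕜 : Type*} [Fintype n] [DecidableEq n] [RCLike 𝕜] {A : Matrix n n 𝕜}

theorem isHermitian_sqrt (hA : A.PosSemidef) : hA.sqrt.IsHermitian := by
  rw [IsHermitian, Matrix.PosSemidef.sqrt, conjTranspose_mul, conjTranspose_mul,
    diagonal_conjTranspose, ← star_eq_conjTranspose, ← star_eq_conjTranspose, star_star, mul_assoc]
  congr 3
  ext i
  simp

theorem sqrt_mul_self (hA : A.PosSemidef) : hA.sqrt * hA.sqrt = A := by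
  set U : Matrix n n 𝕜 := hA.1.eigenvectorUnitary.1
  have hU : star U * U = 1 := Unitary.coe_star_mul_self hA.1.eigenvectorUnitary
  have hD : diagonal ((RCLike.ofReal ∘ (√·) ∘ hA.1.eigenvalues : n → 𝕜)) *
      diagonal ((RCLike.ofReal ∘ (√·) ∘ hA.1.eigenvalues : n → 𝕜))
      = diagonal (RCLike.ofReal ∘ hA.1.eigenvalues) := by
    rw [diagonal_mul_diagonal]
    congr 1 with i
    simp [← RCLike.ofReal_mul, Real.mul_self_sqrt (hA.eigenvalues_nonneg i)]
  conv_rhs => rw [hA.1.spectral_theorem, Unitary.conjStarAlgAut_apply, ← hD]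
  simp only [Matrix.PosSemidef.sqrt, mul_assoc]
  rw [← mul_assoc (star U), hU, one_mul]

end Matrix.PosSemidef

theorem Matrix.PosSemidef.vecMul_sqrt_dotProduct_vecMul_sqrt {n : Type*} [Fintype n]
    [DecidableEq n] {S : Matrix n n ℝ} (hS : S.PosSemidef) (u v : n → ℝ) :
    (u ᵥ* hS.sqrt) ⬝ᵥ (v ᵥ* hS.sqrt) = u ⬝ᵥ S *ᵥ v := by
  have hsymm : hS.sqrtᵀ = hS.sqrt := by
    rw [← conjTranspose_eq_transpose_of_trivial]
    exact hS.isHermitian_sqrt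
  rw [← dotProduct_mulVec, ← mulVec_transpose, hsymm, mulVec_mulVec, hS.sqrt_mul_self]

/-- let `t = Tr(Σ²)` and let `x ~ N(0, Σ)` on `ℝ^d` (realized as
`x = Σ^{1/2} g` with `g` standard Gaussian).  For deterministic `u, v ∈ ℝ^d`,
`E[(⟨u,x⟩⁴ − 6t⟨u,x⟩² + 3t²)(⟨v,x⟩⁴ − 6t⟨v,x⟩² + 3t²)]
  = 24·(uᵀΣv)⁴ + 72·(uᵀΣu − t)(vᵀΣv − t)(uᵀΣv)² + 9·(uᵀΣu − t)²(vᵀΣv − t)²`. -/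
theorem gaussian_hermite4_covariance {d : ℕ} (S : Matrix (Fin d) (Fin d) ℝ)
    (hS : S.PosSemidef) (u v : Fin d → ℝ) :
    ∫ g : Fin d → ℝ,
        ((u ⬝ᵥ hS.sqrt.mulVec g) ^ 4 - 6 * (S * S).trace * (u ⬝ᵥ hS.sqrt.mulVec g) ^ 2
            + 3 * (S * S).trace ^ 2)
          * ((v ⬝ᵥ hS.sqrt.mulVec g) ^ 4 - 6 * (S * S).trace * (v ⬝ᵥ hS.sqrt.mulVec g) ^ 2
            + 3 * (S * S).trace ^ 2)
        ∂(stdGaussianPi d)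
      = 24 * (u ⬝ᵥ S.mulVec v) ^ 4
        + 72 * (u ⬝ᵥ S.mulVec u - (S * S).trace) * (v ⬝ᵥ S.mulVec v - (S * S).trace)
            * (u ⬝ᵥ S.mulVec v) ^ 2
        + 9 * (u ⬝ᵥ S.mulVec u - (S * S).trace) ^ 2
            * (v ⬝ᵥ S.mulVec v - (S * S).trace) ^ 2 := by
  simp only [dotProduct_mulVec u hS.sqrt, dotProduct_mulVec v hS.sqrt]
  rw [integral_hermite4_mul_hermite4]
  simp only [hS.vecMul_sqrt_dotProduct_vecMul_sqrt]
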